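/- Let u ∈ (0,1), α, c, t ∈ ℝ, set L = (1/2)log(1/u), and let X ∼ dN(α,u). Then the moment generating function of Y = c(X − α) satisfies E[e^{tY}] = Σ_{ℓ∈ℤ} u^{(ℓ−α)²/2} e^{tc(ℓ−α)} / Σ_{ℓ∈ℤ} u^{(ℓ−α)²/2} = exp(t²c²/(4L)) · θ(α + tc/(2L); πi/L) / θ(α; πi/L). (Both theta values here are positive real numbers.) -/

import Mathlib

/-!
Writing `u = e^{-2L}`, the weights of `dN(α,u)` are the Gaussian weights `e^{-L(k-α)²}`.
Completing the square turns the tilted weight `e^{-L(k-α)²} e^{tc(k-α)}` into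
`e^{t²c²/(4L)}` times the Gaussian weight recentred at `α + tc/(2L)`, so the moment generating
function is a ratio of two Gaussian sums over `ℤ`. Jacobi's transformation formula
`θ(β; πi/L) = √(L/π) ∑ₙ e^{-L(n-β)²}` identifies each of these sums with a positive real
theta value.
-/

open MeasureTheory Complex
open scoped Real

section DiscreteExpectation

variable {Ω ι E : Type*} [MeasurableSpace Ω] {μ : Measure Ω} [IsFiniteMeasure μ]
  [MeasurableSpace ι] [Countable ι] [MeasurableSingletonClass ι] [NormedAddCommGroup E]

theorem integrable_of_summable_measureReal_mul_norm {f : ι → E} {ν : Measure ι}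
    [IsFiniteMeasure ν] (h : Summable fun k => ν.real {k} * ‖f k‖) : Integrable f ν := by
  rw [← Measure.sum_smul_dirac ν]
  exact integrable_sum_dirac (fun _ => measure_ne_top _ _) h

theorem integral_comp_eq_tsum [NormedSpace ℝ E] [CompleteSpace E] {X : Ω → ι}
    (hX : Measurable X) {f : ι → E} (h : Summable fun k => μ.real (X ⁻¹' {k}) * ‖f k‖) :
    ∫ ω, f (X ω) ∂μ = ∑' k, μ.real (X ⁻¹' {k}) • f k := by
  have hmap : ∀ k, (μ.map X).real {k} = μ.real (X ⁻¹' {k}) := fun k =>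
    map_measureReal_apply hX (measurableSet_singleton k)
  have hf : Integrable f (μ.map X) :=
    integrable_of_summable_measureReal_mul_norm (by simpa only [hmap] using h)
  rw [← integral_map hX.aemeasurable hf.aestronglyMeasurable, integral_countable hf]
  simp only [hmap]

end DiscreteExpectation

noncomputable def discreteGaussianMass (a β : ℝ) : ℝ := ∑' n : ℤ, Real.exp (-a * (n - β) ^ 2)

theorem summable_exp_neg_mul_sq_sub {a : ℝ} (ha : 0 < a) (β : ℝ) :
    Summable fun n : ℤ => Real.exp (-a * (n - β) ^ 2) := by
  refine (HurwitzKernelBounds.summable_f_int 0 (-β) (div_pos ha Real.pi_pos)).congr fun n => ?_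
  simp only [HurwitzKernelBounds.f_int, pow_zero, one_mul]
  congr 1
  field_simp
  ring

theorem discreteGaussianMass_pos {a : ℝ} (ha : 0 < a) (β : ℝ) : 0 < discreteGaussianMass a β :=
  (summable_exp_neg_mul_sq_sub ha β).tsum_pos (fun _ => (Real.exp_pos _).le) 0 (Real.exp_pos _)

theorem exp_neg_mul_sq_mul_exp {a : ℝ} (ha : a ≠ 0) (α s x : ℝ) :
    Real.exp (-a * (x - α) ^ 2) * Real.exp (s * (x - α)) =
      Real.exp (s ^ 2 / (4 * a)) * Real.exp (-a * (x - (α + s / (2 * a))) ^ 2) := by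
  rw [← Real.exp_add, ← Real.exp_add]
  congr 1
  field_simp
  ring

theorem tsum_exp_neg_mul_sq_mul_exp {a : ℝ} (ha : a ≠ 0) (α s : ℝ) :
    ∑' n : ℤ, Real.exp (-a * (n - α) ^ 2) * Real.exp (s * (n - α)) =
      Real.exp (s ^ 2 / (4 * a)) * discreteGaussianMass a (α + s / (2 * a)) := by
  rw [discreteGaussianMass, ← tsum_mul_left]
  exact tsum_congr fun n => exp_neg_mul_sq_mul_exp ha α s n

theorem integral_exp_mul_sub_of_measureReal_preimage {Ω : Type*} [MeasurableSpace Ω]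
    {μ : Measure Ω} [IsFiniteMeasure μ] {X : Ω → ℤ} (hX : Measurable X) {a : ℝ} (ha : 0 < a)
    {α : ℝ}
    (hlaw : ∀ k : ℤ, μ.real (X ⁻¹' {k}) = Real.exp (-a * (k - α) ^ 2) / discreteGaussianMass a α)
    (s : ℝ) :
    ∫ ω, Real.exp (s * (X ω - α)) ∂μ =
      Real.exp (s ^ 2 / (4 * a)) * discreteGaussianMass a (α + s / (2 * a)) /
        discreteGaussianMass a α := by
  have htilt : ∀ k : ℤ, μ.real (X ⁻¹' {k}) * Real.exp (s * (k - α)) =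
      Real.exp (s ^ 2 / (4 * a)) / discreteGaussianMass a α *
        Real.exp (-a * (k - (α + s / (2 * a))) ^ 2) := fun k => by
    rw [hlaw, div_mul_eq_mul_div, exp_neg_mul_sq_mul_exp ha.ne']
    ring
  have hsum : Summable fun k : ℤ => μ.real (X ⁻¹' {k}) * ‖Real.exp (s * (k - α))‖ := by
    simp only [Real.norm_of_nonneg (Real.exp_pos _).le, htilt]
    exact (summable_exp_neg_mul_sq_sub ha _).mul_left _
  rw [integral_comp_eq_tsum hX hsum]
  simp only [smul_eq_mul, htilt]
  rw [tsum_mul_left]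
  exact div_mul_eq_mul_div _ _ _

theorem jacobiTheta₂_ofReal_pi_mul_I_div {a : ℝ} (ha : 0 < a) (β : ℝ) :
    jacobiTheta₂ β (π * I / a) = ((√(a / π) * discreteGaussianMass a β : ℝ) : ℂ) := by
  have hπa : 0 ≤ π / a := (div_pos Real.pi_pos ha).le
  have hfactor : 1 / (-I * (π * I / a)) ^ (1 / 2 : ℂ) = ((√(a / π) : ℝ) : ℂ) := by
    have : -I * (π * I / a) = ((π / a : ℝ) : ℂ) := by
      have : (a : ℂ) ≠ 0 := ofReal_ne_zero.mpr ha.ne'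
      push_cast; field_simp; rw [I_sq]; ring
    rw [this, show (1 / 2 : ℂ) = ((1 / 2 : ℝ) : ℂ) by push_cast; rfl, ← ofReal_cpow hπa,
      ← Real.sqrt_eq_rpow, one_div, ← ofReal_inv, ← Real.sqrt_inv, inv_div]
  have hterm : ∀ n : ℤ, cexp (-π * I * β ^ 2 / (π * I / a)) *
      jacobiTheta₂_term n (β / (π * I / a)) (-1 / (π * I / a)) =
        ((Real.exp (-a * (n - β) ^ 2) : ℝ) : ℂ) := by
    intro n
    have : (π : ℂ) ≠ 0 := ofReal_ne_zero.mpr Real.pi_ne_zero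
    rw [jacobiTheta₂_term, ← Complex.exp_add, ofReal_exp]
    congr 1
    push_cast
    field_simp
    ring
  rw [jacobiTheta₂_functional_equation, hfactor, mul_assoc, jacobiTheta₂, ← tsum_mul_left,
    tsum_congr hterm, ← ofReal_tsum, discreteGaussianMass, ofReal_mul]

theorem rpow_sq_div_two_eq_exp {u : ℝ} (hu : 0 < u) (x : ℝ) :
    u ^ (x ^ 2 / 2) = Real.exp (-(1 / 2 * Real.log (1 / u)) * x ^ 2) := by
  rw [Real.rpow_def_of_pos hu, one_div u, Real.log_inv]
  ring_nf

/-- MGF of the discrete Gaussian in terms of the Jacobi theta function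
`θ(z;τ) = jacobiTheta₂ z τ = Σ_{ℓ∈ℤ} e^{2πiℓz+πiℓ²τ}`: if `X ∼ dN(α,u)`, `u ∈ (0,1)`,
`L = (1/2)log(1/u)` and `Y = c(X−α)`, then
`E e^{tY} = Σ_ℓ u^{(ℓ−α)²/2}e^{tc(ℓ−α)} / Σ_ℓ u^{(ℓ−α)²/2}
          = exp(t²c²/(4L))·θ(α+tc/(2L); πi/L)/θ(α; πi/L)`,
and both theta values are positive real numbers. -/
theorem discrete_gaussian_mgf_theta (u α c t : ℝ) (hu : u ∈ Set.Ioo (0:ℝ) 1)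
    (L : ℝ) (hL : L = (1 / 2) * Real.log (1 / u))
    (Ω : Type) [MeasurableSpace Ω] (μ : Measure Ω) [IsProbabilityMeasure μ]
    (X : Ω → ℤ) (hX : Measurable X)
    (hpmf : ∀ k : ℤ, (μ {ω | X ω = k}).toReal =
      u ^ ((((k : ℝ) - α) ^ 2) / 2) / ∑' j : ℤ, u ^ ((((j : ℝ) - α) ^ 2) / 2)) :
    (∫ ω, Real.exp (t * (c * ((X ω : ℝ) - α))) ∂μ) =
        (∑' ℓ : ℤ, u ^ ((((ℓ : ℝ) - α) ^ 2) / 2) * Real.exp (t * c * ((ℓ : ℝ) - α))) /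
          (∑' ℓ : ℤ, u ^ ((((ℓ : ℝ) - α) ^ 2) / 2)) ∧
      ((∫ ω, Real.exp (t * (c * ((X ω : ℝ) - α))) ∂μ : ℝ) : ℂ) =
        Complex.exp ((t ^ 2 * c ^ 2 / (4 * L) : ℝ)) *
          jacobiTheta₂ ((α + t * c / (2 * L) : ℝ) : ℂ) ((Real.pi : ℂ) * Complex.I / (L : ℂ)) /
          jacobiTheta₂ ((α : ℝ) : ℂ) ((Real.pi : ℂ) * Complex.I / (L : ℂ)) ∧
      (jacobiTheta₂ ((α + t * c / (2 * L) : ℝ) : ℂ)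
          ((Real.pi : ℂ) * Complex.I / (L : ℂ))).im = 0 ∧
      0 < (jacobiTheta₂ ((α + t * c / (2 * L) : ℝ) : ℂ)
          ((Real.pi : ℂ) * Complex.I / (L : ℂ))).re ∧
      (jacobiTheta₂ ((α : ℝ) : ℂ) ((Real.pi : ℂ) * Complex.I / (L : ℂ))).im = 0 ∧
      0 < (jacobiTheta₂ ((α : ℝ) : ℂ) ((Real.pi : ℂ) * Complex.I / (L : ℂ))).re := by
  obtain ⟨hu0, hu1⟩ := hu
  have hL0 : 0 < L := hL ▸ mul_pos one_half_pos (Real.log_pos (one_lt_one_div hu0 hu1))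
  have hweight : ∀ x : ℝ, u ^ (x ^ 2 / 2) = Real.exp (-L * x ^ 2) :=
    hL ▸ rpow_sq_div_two_eq_exp hu0
  have hden : ∑' j : ℤ, u ^ ((((j : ℝ) - α) ^ 2) / 2) = discreteGaussianMass L α :=
    tsum_congr fun j => hweight _
  have hmgf : ∫ ω, Real.exp (t * (c * ((X ω : ℝ) - α))) ∂μ =
      Real.exp (t ^ 2 * c ^ 2 / (4 * L)) * discreteGaussianMass L (α + t * c / (2 * L)) /
        discreteGaussianMass L α := by
    simp only [← mul_assoc t c, ← mul_pow]
    refine integral_exp_mul_sub_of_measureReal_preimage hX hL0 (fun k => ?_) (t * c)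
    rw [measureReal_def, ← hweight, ← hden]
    exact hpmf k
  have hθ := jacobiTheta₂_ofReal_pi_mul_I_div hL0
  have hsqrt : 0 < √(L / π) := Real.sqrt_pos.mpr (div_pos hL0 Real.pi_pos)
  have hθpos : ∀ β : ℝ, 0 < (jacobiTheta₂ β (π * I / L)).re := fun β => by
    rw [hθ, ofReal_re]
    exact mul_pos hsqrt (discreteGaussianMass_pos hL0 β)
  refine ⟨?_, ?_, by rw [hθ, ofReal_im], hθpos _, by rw [hθ, ofReal_im], hθpos _⟩
  · rw [hmgf, hden]
    simp only [hweight]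
    rw [tsum_exp_neg_mul_sq_mul_exp hL0.ne', mul_pow]
  · rw [hmgf, hθ, hθ, ← ofReal_exp, ← ofReal_mul, ← ofReal_div, ofReal_inj]
    have hmass := discreteGaussianMass_pos hL0 α
    field_simp
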